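/- The order-3 Thue-Morse autocorrelation vanishes identically: for all m, n ∈ ℕ, lim_{N→∞} (1/N) Σ_{i=0}^{N-1} σ(i)σ(i+m)σ(i+n) = 0. -/

import Mathlib

/-!
Write `F_{m,n}(N) = ∑_{i<N} σ(i) σ(i+m) σ(i+n)`. Since `σ(2j) = σ(j)` and `σ(2j+1) = -σ(j)`,
splitting the sum over `i < 2N` by parity gives
`F_{m,n}(2N) = ± (F_{⌊m/2⌋,⌊n/2⌋}(N) - F_{⌈m/2⌉,⌈n/2⌉}(N))`,
and the shifts `⌈m/2⌉, ⌈n/2⌉` are smaller than `max m n` once it is at least `2`.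
For shifts in `{0, 1}` the summand collapses to a single shifted `σ`, whose partial sums are
bounded because `σ` sums to `0` over each pair `{2j, 2j+1}`. By strong induction on `max m n`
every `F_{m,n}` is therefore bounded in `N`, so `F_{m,n}(N) / N → 0`.
-/

open Filter Finset

/-- Binary digit-sum of `n`. -/
def digitSum (n : ℕ) : ℕ := (Nat.digits 2 n).sum

/-- The Thue-Morse sign sequence `σ(n) = (-1)^{s(n)}`. -/
def tmSign (n : ℕ) : ℤ := (-1) ^ digitSum n

lemma sum_range_two_mul {M : Type*} [AddCommMonoid M] (f : ℕ → M) (N : ℕ) :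
    ∑ i ∈ range (2 * N), f i = ∑ j ∈ range N, (f (2 * j) + f (2 * j + 1)) := by
  induction N with
  | zero => simp
  | succ N ih =>
    rw [show 2 * (N + 1) = 2 * N + 1 + 1 by ring, sum_range_succ, sum_range_succ,
      sum_range_succ, ih, add_assoc]

lemma digitSum_two_mul_add {b : ℕ} (hb : b < 2) (j : ℕ) :
    digitSum (2 * j + b) = b + digitSum j := by
  rcases Nat.eq_zero_or_pos (2 * j + b) with h | h
  · obtain ⟨rfl, rfl⟩ : j = 0 ∧ b = 0 := by omega
    rfl
  · rw [digitSum, add_comm, Nat.digits_add 2 one_lt_two b j hb (by omega), List.sum_cons, digitSum]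

@[simp]
lemma tmSign_two_mul (j : ℕ) : tmSign (2 * j) = tmSign j := by
  simpa [tmSign] using congrArg ((-1 : ℤ) ^ ·) (digitSum_two_mul_add zero_lt_two j)

@[simp]
lemma tmSign_two_mul_add_one (j : ℕ) : tmSign (2 * j + 1) = -tmSign j := by
  rw [tmSign, digitSum_two_mul_add one_lt_two, pow_add, pow_one, neg_one_mul, tmSign]

lemma tmSign_two_mul_add (j m : ℕ) : tmSign (2 * j + m) = (-1) ^ m * tmSign (j + m / 2) := by
  obtain ⟨k, rfl | rfl⟩ := Nat.even_or_odd' m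
  · rw [← mul_add, tmSign_two_mul, pow_mul, neg_one_sq, one_pow, one_mul,
      Nat.mul_div_cancel_left k zero_lt_two]
  · rw [← add_assoc, ← mul_add, tmSign_two_mul_add_one, pow_succ, pow_mul, neg_one_sq, one_pow,
      Nat.mul_add_div zero_lt_two, Nat.div_eq_of_lt one_lt_two, add_zero]
    ring

@[simp]
lemma tmSign_mul_self (n : ℕ) : tmSign n * tmSign n = 1 := by
  rw [tmSign, ← pow_add, ← two_mul, pow_mul, neg_one_sq, one_pow]

lemma abs_tmSign (n : ℕ) : |tmSign n| = 1 := by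
  rw [tmSign, abs_pow, abs_neg, abs_one, one_pow]

lemma sum_range_two_mul_tmSign (N : ℕ) : ∑ i ∈ range (2 * N), tmSign i = 0 := by
  simp [sum_range_two_mul]

lemma abs_sum_range_tmSign_le (N : ℕ) : |∑ i ∈ range N, tmSign i| ≤ 1 := by
  obtain ⟨K, rfl | rfl⟩ := Nat.even_or_odd' N
  · simp [sum_range_two_mul_tmSign]
  · rw [sum_range_succ, sum_range_two_mul_tmSign, zero_add, abs_tmSign]

lemma abs_sum_range_tmSign_add_le (k N : ℕ) : |∑ i ∈ range N, tmSign (k + i)| ≤ 2 := by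
  rw [← sum_range_add_sub_sum_range]
  calc _ ≤ |∑ i ∈ range (k + N), tmSign i| + |∑ i ∈ range k, tmSign i| := abs_sub _ _
    _ ≤ 1 + 1 := add_le_add (abs_sum_range_tmSign_le _) (abs_sum_range_tmSign_le _)

def tmCorr (m n N : ℕ) : ℤ :=
  ∑ i ∈ range N, tmSign i * tmSign (i + m) * tmSign (i + n)

lemma tmCorr_two_mul (m n N : ℕ) :
    tmCorr m n (2 * N) =
      (-1) ^ (m + n) * (tmCorr (m / 2) (n / 2) N - tmCorr ((m + 1) / 2) ((n + 1) / 2) N) := by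
  rw [tmCorr, sum_range_two_mul, tmCorr, tmCorr, ← sum_sub_distrib, mul_sum]
  refine sum_congr rfl fun j _ => ?_
  have hodd (k : ℕ) : 2 * j + 1 + k = 2 * j + (k + 1) := by ring
  rw [hodd, hodd, tmSign_two_mul_add_one, tmSign_two_mul, tmSign_two_mul_add,
    tmSign_two_mul_add, tmSign_two_mul_add, tmSign_two_mul_add]
  ring

lemma abs_tmCorr_two_mul_le (m n N : ℕ) :
    |tmCorr m n (2 * N)| ≤ |tmCorr (m / 2) (n / 2) N| + |tmCorr ((m + 1) / 2) ((n + 1) / 2) N| := by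
  rw [tmCorr_two_mul, abs_mul, abs_pow, abs_neg, abs_one, one_pow, one_mul]
  exact abs_sub _ _

lemma abs_tmCorr_succ_le (m n N : ℕ) : |tmCorr m n (N + 1)| ≤ |tmCorr m n N| + 1 := by
  rw [tmCorr, sum_range_succ, ← tmCorr]
  refine (abs_add_le _ _).trans_eq ?_
  rw [abs_mul, abs_mul, abs_tmSign, abs_tmSign, abs_tmSign, mul_one, mul_one]

lemma abs_tmCorr_le_two_of_le_one {m n : ℕ} (hm : m ≤ 1) (hn : n ≤ 1) (N : ℕ) :
    |tmCorr m n N| ≤ 2 := by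
  obtain ⟨k, hk⟩ : ∃ k, ∀ i, tmSign i * tmSign (i + m) * tmSign (i + n) = tmSign (k + i) := by
    interval_cases m <;> interval_cases n
    · exact ⟨0, fun i => by simp⟩
    · exact ⟨1, fun i => by simp [add_comm 1]⟩
    · exact ⟨1, fun i => by rw [add_zero, mul_right_comm, tmSign_mul_self, one_mul, add_comm]⟩
    · exact ⟨0, fun i => by rw [mul_assoc, tmSign_mul_self, mul_one, zero_add]⟩
  simp_rw [tmCorr, hk]
  exact abs_sum_range_tmSign_add_le k N

lemma tmCorr_bounded (m n : ℕ) : ∃ C : ℤ, ∀ N, |tmCorr m n N| ≤ C := by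
  induction h : max m n using Nat.strong_induction_on generalizing m n with
  | _ M ih =>
    by_cases hsmall : m ≤ 1 ∧ n ≤ 1
    · exact ⟨2, abs_tmCorr_le_two_of_le_one hsmall.1 hsmall.2⟩
    obtain ⟨C₁, hC₁⟩ := ih _ (by omega) (m / 2) (n / 2) rfl
    obtain ⟨C₂, hC₂⟩ := ih _ (by omega) ((m + 1) / 2) ((n + 1) / 2) rfl
    have heven (K : ℕ) : |tmCorr m n (2 * K)| ≤ C₁ + C₂ :=
      (abs_tmCorr_two_mul_le m n K).trans (add_le_add (hC₁ K) (hC₂ K))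
    refine ⟨C₁ + C₂ + 1, fun N => ?_⟩
    obtain ⟨K, rfl | rfl⟩ := Nat.even_or_odd' N
    · linarith [heven K]
    · linarith [heven K, abs_tmCorr_succ_le m n (2 * K)]

/-- The order-3 Thue-Morse autocorrelation vanishes identically. -/
theorem tm_autocorrelation3_eq_zero (m n : ℕ) :
    Tendsto
      (fun N : ℕ => (1 / (N : ℝ)) *
        ∑ i ∈ range N, (tmSign i : ℝ) * (tmSign (i + m) : ℝ) * (tmSign (i + n) : ℝ))
      atTop (nhds 0) := by
  obtain ⟨C, hC⟩ := tmCorr_bounded m n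
  have hcast (N : ℕ) : ∑ i ∈ range N, (tmSign i : ℝ) * (tmSign (i + m) : ℝ) * (tmSign (i + n) : ℝ)
      = tmCorr m n N := by
    push_cast [tmCorr]
    rfl
  simp_rw [hcast]
  refine tendsto_one_div_atTop_nhds_zero_nat.zero_mul_isBoundedUnder_le
    (isBoundedUnder_of ⟨C, fun N => ?_⟩)
  rw [Function.comp_apply, Real.norm_eq_abs, ← Int.cast_abs]
  exact_mod_cast hC N
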